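/- Let b ∈ ℤ, b ≠ 0, and t ∈ ℂ. Define W_t(x,y) = (y² − x)(x − b²) + (t² − 2bt)(y − b)², and define rational functions ψ_{1,t}(w) = −(4wt² − 8wtb − b² + 2b²w − b²w²)/(w+1)² and ψ_{2,t}(w) = −(4wt² − 8wtb + bt − 2b² − bw²t + 2b²w)/((wt − t + 2b)(w+1)). Then W_t(ψ_{1,t}(w), ψ_{2,t}(w)) = 0 identically in w (wherever defined), ψ_{1,t}(w) = ψ_{1,t}(1/w), ψ_{1,t}(0) = b², and ψ_{2,t}(0) = b. -/

import Mathlib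

/-- The curve W_t(x,y) = (y²−x)(x−b²) + (t²−2bt)(y−b)². -/
noncomputable def Wcurve (b : ℤ) (t x y : ℂ) : ℂ :=
  (y ^ 2 - x) * (x - (b : ℂ) ^ 2) + (t ^ 2 - 2 * (b : ℂ) * t) * (y - (b : ℂ)) ^ 2

/-- First component of the normalization map. -/
noncomputable def psi1 (b : ℤ) (t w : ℂ) : ℂ :=
  -(4 * w * t ^ 2 - 8 * w * t * (b : ℂ) - (b : ℂ) ^ 2 + 2 * (b : ℂ) ^ 2 * w
      - (b : ℂ) ^ 2 * w ^ 2) / ((w + 1) ^ 2)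

/-- Second component of the normalization map. -/
noncomputable def psi2 (b : ℤ) (t w : ℂ) : ℂ :=
  -(4 * w * t ^ 2 - 8 * w * t * (b : ℂ) + (b : ℂ) * t - 2 * (b : ℂ) ^ 2
      - (b : ℂ) * w ^ 2 * t + 2 * (b : ℂ) ^ 2 * w) / ((w * t - t + 2 * (b : ℂ)) * (w + 1))

/-! Both `ψ₁ - b²` and `ψ₂ - b` have numerator `K = -4w(t - b)²`, over `E²` and `DE` with
`E = w + 1`, `D = wt - t + 2b`. Substituting into `W_t` leaves `K²/(D²E⁴)` times
`K + 2bDE - D² + (t² - 2bt)E²`, which vanishes identically because `D = tE - 2(t - b)`.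
The symmetry `ψ₁(1/w) = ψ₁(w)` holds because numerator and denominator of `ψ₁` are palindromic
quadratics in `w`. -/

theorem Wcurve_eq (b : ℤ) (t x y : ℂ) :
    Wcurve b t x y = ((y - b) ^ 2 + 2 * b * (y - b) - (x - b ^ 2)) * (x - b ^ 2)
      + (t ^ 2 - 2 * b * t) * (y - b) ^ 2 := by
  unfold Wcurve
  ring

theorem Wcurve_eq_of_sub_eq_div (b : ℤ) (t x y K D E : ℂ) (hD : D ≠ 0) (hE : E ≠ 0)
    (hx : x - b ^ 2 = K / E ^ 2) (hy : y - b = K / (D * E)) :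
    Wcurve b t x y = K ^ 2 / (D ^ 2 * E ^ 4) *
      (K + 2 * b * D * E - D ^ 2 + (t ^ 2 - 2 * b * t) * E ^ 2) := by
  rw [Wcurve_eq, hx, hy]
  field_simp

theorem psi1_sub_sq (b : ℤ) (t w : ℂ) (hw : w + 1 ≠ 0) :
    psi1 b t w - b ^ 2 = -4 * w * (t - b) ^ 2 / (w + 1) ^ 2 := by
  rw [psi1, eq_div_iff (pow_ne_zero 2 hw), sub_mul, div_mul_cancel₀ _ (pow_ne_zero 2 hw)]
  ring

theorem psi2_sub (b : ℤ) (t w : ℂ) (hw : w + 1 ≠ 0) (hwt : w * t - t + 2 * (b : ℂ) ≠ 0) :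
    psi2 b t w - b = -4 * w * (t - b) ^ 2 / ((w * t - t + 2 * b) * (w + 1)) := by
  rw [psi2, eq_div_iff (mul_ne_zero hwt hw), sub_mul, div_mul_cancel₀ _ (mul_ne_zero hwt hw)]
  ring

theorem Wcurve_psi1_psi2 (b : ℤ) (t w : ℂ) (hw : w + 1 ≠ 0)
    (hwt : w * t - t + 2 * (b : ℂ) ≠ 0) :
    Wcurve b t (psi1 b t w) (psi2 b t w) = 0 := by
  rw [Wcurve_eq_of_sub_eq_div b t _ _ _ _ _ hwt hw (psi1_sub_sq b t w hw)
    (psi2_sub b t w hw hwt)]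
  ring

theorem psi1_inv (b : ℤ) (t w : ℂ) : psi1 b t w⁻¹ = psi1 b t w := by
  rcases eq_or_ne w 0 with rfl | hw
  · rw [inv_zero]
  unfold psi1
  rw [← mul_div_mul_right _ _ (pow_ne_zero 2 hw)]
  congr 1 <;> field_simp <;> ring

theorem psi1_zero (b : ℤ) (t : ℂ) : psi1 b t 0 = (b : ℂ) ^ 2 := by
  simp [psi1]

theorem psi2_zero (b : ℤ) (t : ℂ) (h : 2 * (b : ℂ) - t ≠ 0) : psi2 b t 0 = b := by
  unfold psi2
  rw [div_eq_iff (by simpa [sub_eq_neg_add, add_comm] using h)]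
  ring

theorem stmt_10_general (b : ℤ) (t : ℂ) :
    (∀ w : ℂ, w + 1 ≠ 0 → w * t - t + 2 * (b : ℂ) ≠ 0 →
      Wcurve b t (psi1 b t w) (psi2 b t w) = 0) ∧
    (∀ w : ℂ, w ≠ 0 → psi1 b t w = psi1 b t (1 / w)) ∧
    psi1 b t 0 = (b : ℂ) ^ 2 ∧
    (2 * (b : ℂ) - t ≠ 0 → psi2 b t 0 = (b : ℂ)) :=
  ⟨Wcurve_psi1_psi2 b t,
    fun w _ => by rw [one_div, psi1_inv],
    psi1_zero b t, psi2_zero b t⟩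

/-- §4.5: ψ_t = (ψ_{1,t}, ψ_{2,t}) parameterizes the curve {W_t = 0} (wherever defined),
ψ_{1,t}(w) = ψ_{1,t}(1/w), ψ_{1,t}(0) = b², and ψ_{2,t}(0) = b. -/
theorem stmt_10 (b : ℤ) (hb : b ≠ 0) (t : ℂ) :
    (∀ w : ℂ, w + 1 ≠ 0 → w * t - t + 2 * (b : ℂ) ≠ 0 →
      Wcurve b t (psi1 b t w) (psi2 b t w) = 0) ∧
    (∀ w : ℂ, w ≠ 0 → psi1 b t w = psi1 b t (1 / w)) ∧
    psi1 b t 0 = (b : ℂ) ^ 2 ∧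
    (2 * (b : ℂ) - t ≠ 0 → psi2 b t 0 = (b : ℂ)) :=
  stmt_10_general b t
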